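/- arXiv:math/9201205 — 3 statements merged into one kernel-verified Lean document; each statement's English description precedes it below -/
import Mathlib

section
/- Let 1 ≤ p ≤ 2, let (u_i)_{i=1}^m be unit vectors in R^n and (c_i)_{i=1}^m positive real numbers satisfying Σ_{i=1}^m c_i u_i⊗u_i = I_n. Then for every x ∈ R^n, Σ_{i=1}^m c_i |⟨u_i, x⟩|^p ≤ n^{1 − p/2} |x|^p, where |x| is the Euclidean norm of x. Consequently the set {x : Σ_{i=1}^m c_i |⟨u_i,x⟩|^p ≤ 1} contains the Euclidean ball of radius n^{1/2 − 1/p}. -/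
/-!
A decomposition of the identity `Σ cᵢ uᵢ⊗uᵢ = I` gives Parseval's identity
`Σ cᵢ ⟨uᵢ,x⟩² = ‖x‖²`, and taking traces (with unit `uᵢ`) gives `Σ cᵢ = n`. Hölder's
inequality with exponent `2/p ≥ 1` for the weights `cᵢ` then bounds `Σ cᵢ |⟨uᵢ,x⟩|ᵖ` by
`(Σ cᵢ)^{1-p/2} (Σ cᵢ ⟨uᵢ,x⟩²)^{p/2} = n^{1-p/2} ‖x‖ᵖ`.
-/

open MeasureTheory Finset Metric
open scoped RealInnerProductSpace

section FrameDecomposition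

variable {ι E : Type*} [Fintype ι] [NormedAddCommGroup E] [InnerProductSpace ℝ E]
  {u : ι → E} {c : ι → ℝ}

lemma sum_mul_inner_sq_eq_norm_sq (h : ∀ x, ∑ i, c i • ⟪u i, x⟫ • u i = x) (x : E) :
    ∑ i, c i * ⟪u i, x⟫ ^ 2 = ‖x‖ ^ 2 := by
  calc ∑ i, c i * ⟪u i, x⟫ ^ 2 = ⟪∑ i, c i • ⟪u i, x⟫ • u i, x⟫ := by
        simp only [sum_inner, real_inner_smul_left]
        exact sum_congr rfl fun i _ => by ring
    _ = ‖x‖ ^ 2 := by rw [h, real_inner_self_eq_norm_sq]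

lemma sum_eq_finrank_of_sum_smul_inner_smul_eq [FiniteDimensional ℝ E]
    (hu : ∀ i, ‖u i‖ = 1) (h : ∀ x, ∑ i, c i • ⟪u i, x⟫ • u i = x) :
    ∑ i, c i = Module.finrank ℝ E := by
  let b := stdOrthonormalBasis ℝ E
  calc ∑ i, c i = ∑ i, c i * ∑ j, ⟪b j, u i⟫ ^ 2 := by
        simp only [b.sum_sq_inner_right, hu, one_pow, mul_one]
    _ = ∑ j, ∑ i, c i * ⟪u i, b j⟫ ^ 2 := by
        rw [sum_comm]
        simp only [mul_sum, real_inner_comm]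
    _ = Module.finrank ℝ E := by
        simp [sum_mul_inner_sq_eq_norm_sq h, b.orthonormal.1]

end FrameDecomposition

lemma sum_mul_abs_rpow_le {ι : Type*} (s : Finset ι) {p : ℝ} (hp0 : 0 < p) (hp2 : p ≤ 2)
    (w a : ι → ℝ) (hw : ∀ i, 0 ≤ w i) :
    ∑ i ∈ s, w i * |a i| ^ p ≤
      (∑ i ∈ s, w i) ^ (1 - p / 2) * (∑ i ∈ s, w i * a i ^ 2) ^ (p / 2) := by
  have hq : 1 ≤ 2 / p := by rw [le_div_iff₀ hp0]; linarith
  have hpow : ∀ i, (|a i| ^ p) ^ (2 / p) = a i ^ 2 := fun i => by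
    rw [← Real.rpow_mul (abs_nonneg _), mul_div_cancel₀ _ hp0.ne', Real.rpow_two, sq_abs]
  have holder := Real.inner_le_weight_mul_Lp_of_nonneg s hq w (fun i => |a i| ^ p) hw
    (fun i => by positivity)
  simpa only [hpow, inv_div] using holder

/-- For `1 ≤ p ≤ 2` and a John decomposition `Σ cᵢ uᵢ⊗uᵢ = Iₙ`,
`Σ cᵢ |⟨uᵢ,x⟩|ᵖ ≤ n^{1−p/2} |x|ᵖ` for all `x`; consequently the unit ball of this
expression contains the Euclidean ball of radius `n^{1/2−1/p}`. -/
theorem statement10 {n m : ℕ} (p : ℝ) (hp1 : 1 ≤ p) (hp2 : p ≤ 2)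
    (u : Fin m → EuclideanSpace ℝ (Fin n)) (c : Fin m → ℝ)
    (hu : ∀ i, ‖u i‖ = 1) (hc : ∀ i, 0 < c i)
    (hJohn : ∀ x : EuclideanSpace ℝ (Fin n), ∑ i, c i • ⟪u i, x⟫ • u i = x) :
    (∀ x : EuclideanSpace ℝ (Fin n),
        ∑ i, c i * |⟪u i, x⟫| ^ p ≤ (n : ℝ) ^ (1 - p / 2) * ‖x‖ ^ p) ∧
      Metric.closedBall (0 : EuclideanSpace ℝ (Fin n)) ((n : ℝ) ^ ((1 : ℝ) / 2 - 1 / p)) ⊆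
        {x : EuclideanSpace ℝ (Fin n) | ∑ i, c i * |⟪u i, x⟫| ^ p ≤ 1} := by
  have hp0 : 0 < p := by linarith
  have htrace : ∑ i, c i = n := by
    simpa using sum_eq_finrank_of_sum_smul_inner_smul_eq hu hJohn
  have bound : ∀ x : EuclideanSpace ℝ (Fin n),
      ∑ i, c i * |⟪u i, x⟫| ^ p ≤ (n : ℝ) ^ (1 - p / 2) * ‖x‖ ^ p := fun x => by
    have := sum_mul_abs_rpow_le univ hp0 hp2 c (fun i => ⟪u i, x⟫) (fun i => (hc i).le)
    rwa [htrace, sum_mul_inner_sq_eq_norm_sq hJohn, ← Real.rpow_two, ← Real.rpow_mul (norm_nonneg x),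
      mul_div_cancel₀ _ two_ne_zero] at this
  refine ⟨bound, fun x hx => ?_⟩
  rw [mem_closedBall_zero_iff] at hx
  have hn : (0 : ℝ) ≤ n := n.cast_nonneg
  -- `n^{1-p/2} * (n^{1-p/2})⁻¹ ≤ 1` also holds when `n = 0`
  calc ∑ i, c i * |⟪u i, x⟫| ^ p ≤ (n : ℝ) ^ (1 - p / 2) * ‖x‖ ^ p := bound x
    _ ≤ (n : ℝ) ^ (1 - p / 2) * ((n : ℝ) ^ ((1 : ℝ) / 2 - 1 / p)) ^ p := by gcongr
    _ = (n : ℝ) ^ (1 - p / 2) * ((n : ℝ) ^ (1 - p / 2))⁻¹ := by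
        rw [← Real.rpow_mul hn, ← Real.rpow_neg hn]
        congr 2
        field_simp
        ring
    _ ≤ 1 := mul_inv_le_one
end

section
/- For every integer n ≥ 1, the volume ratio of ℓ^n_1 satisfies n^{n/2} · 2^n · Γ(1 + n/2) / (Γ(n+1) · π^{n/2}) ≤ (2e/π)^{n/2}; equivalently, since the Euclidean ball of maximal volume inside the cross-polytope B^n_1 has radius n^{−1/2}, one has vol(B^n_1) / vol(n^{−1/2} B^n_2) ≤ (2e/π)^{n/2}. -/
open MeasureTheory Finset Metric
open Real Nat


lemma stirling_sqrt_pi_le (n : ℕ) : Real.sqrt π ≤ Stirling.stirlingSeq (n+1) := by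
  have ha := Stirling.stirlingSeq'_antitone
  have ht : Filter.Tendsto (Stirling.stirlingSeq ∘ Nat.succ) Filter.atTop (nhds (Real.sqrt π)) :=
    (Filter.tendsto_add_atTop_iff_nat 1).mpr Stirling.tendsto_stirlingSeq_sqrt_pi
  exact ha.le_of_tendsto ht n

lemma denom_pos (n : ℕ) : 0 < Real.sqrt (2*(n+1) : ℝ) * (((n:ℝ)+1) / exp 1) ^ (n+1) := by
  positivity

lemma stirling_lower (n : ℕ) :
    Real.sqrt π * (Real.sqrt (2*(n+1) : ℝ) * (((n:ℝ)+1) / exp 1) ^ (n+1)) ≤ ((n+1)! : ℝ) := by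
  have h := stirling_sqrt_pi_le n
  rw [Stirling.stirlingSeq, le_div_iff₀ (by push_cast; exact denom_pos n)] at h
  push_cast at h ⊢
  linarith

lemma stirling_upper (n : ℕ) :
    ((n+1)! : ℝ) ≤ (exp 1 / Real.sqrt 2) * (Real.sqrt (2*(n+1) : ℝ) * (((n:ℝ)+1) / exp 1) ^ (n+1)) := by
  have h : Stirling.stirlingSeq (n+1) ≤ Stirling.stirlingSeq 1 := by
    have := Stirling.stirlingSeq'_antitone (Nat.zero_le n)
    simpa using this
  rw [Stirling.stirlingSeq_one] at h
  rw [Stirling.stirlingSeq, div_le_iff₀ (by push_cast; exact denom_pos n)] at h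
  push_cast at h ⊢
  linarith

lemma ident (m : ℕ) (E : ℝ) (hE : 0 < E) (a : ℝ) :
    (2*E)^m * (2*a/E)^(2*m) = (2*a)^m * 2^(2*m) * (a/E)^m := by
  have h : E^m * E⁻¹^m = 1 := by rw [← mul_pow, mul_inv_cancel₀ hE.ne', one_pow]
  rw [div_eq_mul_inv, div_eq_mul_inv]
  linear_combination (2:ℝ)^m * 2^(2*m) * a^(2*m) * E⁻¹^m * h

lemma e_le_two_sqrt_pi : Real.exp 1 ≤ 2 * Real.sqrt π := by
  have h1 : (1.7:ℝ) ≤ Real.sqrt π := by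
    rw [show (1.7:ℝ) = Real.sqrt (1.7^2) by rw [Real.sqrt_sq]; norm_num]
    exact Real.sqrt_le_sqrt (by nlinarith [Real.pi_gt_d6])
  nlinarith [Real.exp_one_lt_d9]

lemma key_even (k : ℕ) :
    (2*((k:ℝ)+1))^(k+1) * 2^(2*(k+1)) * ((k+1)! : ℝ) ≤ ((2*(k+1))! : ℝ) * (2 * exp 1)^(k+1) := by
  set m := k + 1 with hm
  have hU := stirling_upper k
  have hL := stirling_lower (2*k+1)
  have h2 : ((2*k+1 : ℕ):ℝ) + 1 = 2*((k:ℝ)+1) := by push_cast; ring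
  rw [h2] at hL
  have h3 : 2*k+1+1 = 2*m := by omega
  rw [h3] at hL
  have hE : (0:ℝ) < exp 1 := exp_pos 1
  have hsm : (0:ℝ) < Real.sqrt (2*((k:ℝ)+1)) := by positivity
  calc (2*((k:ℝ)+1))^m * 2^(2*m) * ((m)! : ℝ)
      ≤ (2*((k:ℝ)+1))^m * 2^(2*m) * ((exp 1 / Real.sqrt 2) * (Real.sqrt (2*(k+1) : ℝ) * (((k:ℝ)+1) / exp 1) ^ m)) := by
        exact mul_le_mul_of_nonneg_left hU (by positivity)
    _ = (exp 1 / Real.sqrt 2) * Real.sqrt (2*((k:ℝ)+1)) * ((2*exp 1)^m * (2*((k:ℝ)+1)/exp 1)^(2*m)) := by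
        rw [ident m (exp 1) hE ((k:ℝ)+1)]
        push_cast
        ring
    _ ≤ (Real.sqrt π * Real.sqrt (2*(2*((k:ℝ)+1)))) * ((2*exp 1)^m * (2*((k:ℝ)+1)/exp 1)^(2*m)) := by
        have key : (exp 1 / Real.sqrt 2) * Real.sqrt (2*((k:ℝ)+1)) ≤ Real.sqrt π * Real.sqrt (2*(2*((k:ℝ)+1))) := by
          have h4 : Real.sqrt (2*(2*((k:ℝ)+1))) = Real.sqrt 2 * Real.sqrt (2*((k:ℝ)+1)) := by
            rw [← Real.sqrt_mul (by norm_num)]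
          rw [h4, div_mul_eq_mul_div, div_le_iff₀ (by positivity)]
          have h5 := mul_le_mul_of_nonneg_right e_le_two_sqrt_pi hsm.le
          have hs2 : Real.sqrt 2 * Real.sqrt 2 = 2 := Real.mul_self_sqrt (by norm_num)
          have h6 : Real.sqrt π * (Real.sqrt 2 * Real.sqrt (2*((k:ℝ)+1))) * Real.sqrt 2
              = 2 * Real.sqrt π * Real.sqrt (2*((k:ℝ)+1)) := by
            have h7 : Real.sqrt π * (Real.sqrt 2 * Real.sqrt (2*((k:ℝ)+1))) * Real.sqrt 2
                = (Real.sqrt 2 * Real.sqrt 2) * (Real.sqrt π * Real.sqrt (2*((k:ℝ)+1))) := by ring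
            rw [h7, hs2]; ring
          linarith
        exact mul_le_mul_of_nonneg_right key (by positivity)
    _ = (Real.sqrt π * (Real.sqrt (2*(2*((k:ℝ)+1))) * ((2*((k:ℝ)+1)) / exp 1) ^ (2*m))) * (2*exp 1)^m := by
        ring
    _ ≤ ((2*m)! : ℝ) * (2 * exp 1)^m := by
        exact mul_le_mul_of_nonneg_right hL (by positivity)

lemma exp_half_le_two : Real.exp (1/2 : ℝ) ≤ 2 := by
  have h : Real.exp (1/2:ℝ) ^ 2 = Real.exp 1 := by
    rw [← Real.exp_nat_mul]; norm_num
  nlinarith [Real.exp_pos (1/2:ℝ), Real.exp_one_lt_d9]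

lemma ident2 (j : ℕ) (E a : ℝ) (hE : E ≠ 0) :
    π * ((2*a)^(2*(j+1)+1) * (2*E)) = (π * (2*a) * (a/E)^(2*(j+1))) * (2*E)^(2*(j+1)+1) := by
  have h : E^(2*(j+1)) * E⁻¹^(2*(j+1)) = 1 := by rw [← mul_pow, mul_inv_cancel₀ hE, one_pow]
  rw [div_eq_mul_inv]
  linear_combination (-π * 2^(2*(j+1)+2) * a^(2*(j+1)+1) * E) * h

lemma key_odd (m : ℕ) :
    π * (2*(m:ℝ)+1)^(2*m+1) ≤ ((m ! : ℝ))^2 * (2 * exp 1)^(2*m+1) := by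
  rcases Nat.eq_zero_or_pos m with rfl | hm
  · simp only [Nat.cast_zero, mul_zero, zero_add, pow_one, factorial_zero, Nat.cast_one, one_pow,
      one_mul]
    nlinarith [Real.pi_lt_d2, Real.exp_one_gt_d9]
  · obtain ⟨k, hk⟩ := Nat.exists_eq_add_of_le hm
    have hk' : m = k + 1 := by omega
    subst hk'
    set a : ℝ := (k:ℝ) + 1 with ha
    have ha1 : (1:ℝ) ≤ a := by rw [ha]; have := Nat.cast_nonneg (α := ℝ) k; linarith
    have ha0 : (0:ℝ) < a := by linarith
    have h2a : (0:ℝ) < 2*a := by linarith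
    have hL := stirling_lower k
    have hsq : π * (2*a) * (a / exp 1)^(2*(k+1)) ≤ ((k+1)! : ℝ)^2 := by
      have hnn : 0 ≤ Real.sqrt π * (Real.sqrt (2*(k+1) : ℝ) * (a / exp 1) ^ (k+1)) := by positivity
      have h0 := mul_self_le_mul_self hnn hL
      calc π * (2*a) * (a / exp 1)^(2*(k+1))
          = (Real.sqrt π * (Real.sqrt (2*(k+1) : ℝ) * (a / exp 1) ^ (k+1)))
            * (Real.sqrt π * (Real.sqrt (2*(k+1) : ℝ) * (a / exp 1) ^ (k+1))) := by
            rw [show (2*((k:ℕ)+1) : ℝ) = 2*a by push_cast [ha]; ring]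
            have h1 : Real.sqrt π * Real.sqrt π = π := Real.mul_self_sqrt pi_pos.le
            have h2 : Real.sqrt (2*a) * Real.sqrt (2*a) = 2*a := Real.mul_self_sqrt (by positivity)
            calc π * (2*a) * (a / exp 1)^(2*(k+1))
                = (Real.sqrt π * Real.sqrt π) * (Real.sqrt (2*a) * Real.sqrt (2*a))
                  * ((a / exp 1)^(k+1) * (a / exp 1)^(k+1)) := by
                  rw [h1, h2, ← pow_add]
                  ring_nf
              _ = _ := by ring
        _ ≤ ((k+1)! : ℝ)^2 := by rw [sq]; exact h0
    have hstep : 2*a+1 ≤ 2*a * Real.exp (1/(2*a)) := by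
      have h0 := Real.add_one_le_exp (1/(2*a))
      have h1 : (2*a) * (1/(2*a) + 1) ≤ 2*a * Real.exp (1/(2*a)) :=
        mul_le_mul_of_nonneg_left h0 h2a.le
      have h2 : (2*a) * (1/(2*a) + 1) = 2*a+1 := by field_simp; linarith
      linarith
    have hpow : (2*a+1)^(2*(k+1)+1) ≤ (2*a)^(2*(k+1)+1) * Real.exp (1/(2*a)) ^ (2*(k+1)+1) := by
      calc (2*a+1)^(2*(k+1)+1) ≤ (2*a * Real.exp (1/(2*a)))^(2*(k+1)+1) :=
            pow_le_pow_left₀ (by positivity) hstep _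
        _ = _ := by rw [mul_pow]
    have hexp : Real.exp (1/(2*a)) ^ (2*(k+1)+1) ≤ 2 * exp 1 := by
      rw [← Real.exp_nat_mul]
      have hc : ((2*(k+1)+1 : ℕ):ℝ) = 2*a+1 := by push_cast [ha]; ring
      have h1 : ((2*(k+1)+1 : ℕ):ℝ) * (1/(2*a)) ≤ 3/2 := by
        rw [hc, mul_one_div, div_le_iff₀ h2a]; linarith
      calc Real.exp (((2*(k+1)+1 : ℕ):ℝ) * (1/(2*a))) ≤ Real.exp (3/2 : ℝ) :=
            Real.exp_le_exp.mpr h1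
        _ = Real.exp 1 * Real.exp (1/2 : ℝ) := by rw [← Real.exp_add]; norm_num
        _ ≤ Real.exp 1 * 2 := mul_le_mul_of_nonneg_left exp_half_le_two (exp_pos 1).le
        _ = 2 * exp 1 := by ring
    have hcast : ((k+1 : ℕ):ℝ) = a := by push_cast [ha]; ring
    rw [show (2*((k+1:ℕ):ℝ)+1) = 2*a+1 by rw [hcast]]
    calc π * (2*a+1)^(2*(k+1)+1)
        ≤ π * ((2*a)^(2*(k+1)+1) * Real.exp (1/(2*a)) ^ (2*(k+1)+1)) :=
          mul_le_mul_of_nonneg_left hpow pi_pos.le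
      _ ≤ π * ((2*a)^(2*(k+1)+1) * (2 * exp 1)) := by
          have := mul_le_mul_of_nonneg_left hexp (pow_nonneg h2a.le (2*(k+1)+1))
          nlinarith [pi_pos]
      _ = (π * (2*a) * (a / exp 1)^(2*(k+1))) * (2*exp 1)^(2*(k+1)+1) :=
          ident2 k (exp 1) a (Real.exp_ne_zero 1)
      _ ≤ ((k+1)! : ℝ)^2 * (2*exp 1)^(2*(k+1)+1) :=
          mul_le_mul_of_nonneg_right hsq (by positivity)

lemma key (n : ℕ) (hn : 1 ≤ n) :
    (n:ℝ)^((n:ℝ)/2) * 2^n * Real.Gamma (1+(n:ℝ)/2) ≤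
      Real.Gamma ((n:ℝ)+1) * (2*Real.exp 1)^((n:ℝ)/2) := by
  rcases Nat.even_or_odd n with ⟨m, hm⟩ | ⟨m, hm⟩
  · -- n = 2m, m ≥ 1
    have hm1 : 1 ≤ m := by omega
    obtain ⟨k, rfl⟩ : ∃ k, m = k + 1 := ⟨m - 1, by omega⟩
    subst hm
    have hc : (((k+1) + (k+1) : ℕ):ℝ)/2 = ((k+1 : ℕ):ℝ) := by push_cast; ring
    rw [hc, Real.rpow_natCast, Real.rpow_natCast]
    have hg1 : Real.Gamma (1 + ((k+1:ℕ):ℝ)) = ((k+1)! : ℝ) := by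
      rw [add_comm, Real.Gamma_nat_eq_factorial]
    have hg2 : Real.Gamma ((((k+1)+(k+1) : ℕ):ℝ) + 1) = (((k+1)+(k+1))! : ℝ) :=
      Real.Gamma_nat_eq_factorial _
    rw [hg1, hg2]
    have h := key_even k
    have e1 : ((((k+1)+(k+1)) : ℕ):ℝ) = 2*((k:ℝ)+1) := by push_cast; ring
    have e2 : ((k+1)+(k+1)) = 2*(k+1) := by ring
    rw [e1, e2]
    exact h
  · -- n = 2m+1
    subst hm
    set c : ℝ := ((2*m+1 : ℕ):ℝ) with hcdef
    have hc0 : (0:ℝ) < c := by rw [hcdef]; positivity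
    have hdup := Real.Gamma_mul_Gamma_add_half ((m:ℝ)+1)
    have hmfac : Real.Gamma ((m:ℝ)+1) = (m ! : ℝ) := Real.Gamma_nat_eq_factorial m
    have hmpos : (0:ℝ) < (m ! : ℝ) := by positivity
    have h1 : ((m:ℝ)+1) + 1/2 = 1 + c/2 := by rw [hcdef]; push_cast; ring
    have h2 : 2*((m:ℝ)+1) = c + 1 := by rw [hcdef]; push_cast; ring
    have h3 : Real.Gamma (c+1) = ((2*m+1)! : ℝ) := Real.Gamma_nat_eq_factorial _
    rw [h1, h2, h3, hmfac] at hdup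
    -- hdup : m! * Γ(1+c/2) = (2m+1)! * 2^(1-2*((m:ℝ)+1)) * √π  (rpow)
    have h4 : (1 - (c+1)) = -(((2*m+1:ℕ):ℝ)) := by rw [hcdef]; push_cast; ring
    rw [h4] at hdup
    have hgam : Real.Gamma (1 + c/2) = ((2*m+1)! : ℝ) * (2:ℝ)^(-(((2*m+1:ℕ):ℝ))) * Real.sqrt π / (m !) := by
      field_simp at hdup ⊢
      linarith
    rw [hgam]
    -- 2^(2m+1) (npow) * 2^(-(2m+1)) (rpow) = 1
    have hpow2 : (2:ℝ)^(2*m+1) * (2:ℝ)^(-(((2*m+1:ℕ):ℝ))) = 1 := by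
      rw [← Real.rpow_natCast 2 (2*m+1), ← Real.rpow_add (by norm_num)]
      rw [show ((2*m+1:ℕ):ℝ) + -(((2*m+1:ℕ):ℝ)) = 0 by ring, Real.rpow_zero]
    -- reduce goal
    have main : c^(c/2) * Real.sqrt π ≤ (m ! : ℝ) * (2*Real.exp 1)^(c/2) := by
      have hsqL : (c^(c/2) * Real.sqrt π)^2 = π * c^(2*m+1) := by
        rw [mul_pow, Real.sq_sqrt pi_pos.le, ← Real.rpow_natCast (c^(c/2)) 2,
          ← Real.rpow_mul hc0.le]
        rw [show (c/2) * ((2:ℕ):ℝ) = c by push_cast; ring]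
        rw [hcdef, Real.rpow_natCast]
        ring
      have hsqR : ((m ! : ℝ) * (2*Real.exp 1)^(c/2))^2 = ((m ! : ℝ))^2 * (2*Real.exp 1)^(2*m+1) := by
        rw [mul_pow, ← Real.rpow_natCast ((2*Real.exp 1)^(c/2)) 2, ← Real.rpow_mul (by positivity)]
        rw [show (c/2) * ((2:ℕ):ℝ) = c by push_cast; ring]
        rw [hcdef, Real.rpow_natCast]
      have hk := key_odd m
      have hsq : (c^(c/2) * Real.sqrt π)^2 ≤ ((m ! : ℝ) * (2*Real.exp 1)^(c/2))^2 := by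
        rw [hsqL, hsqR]
        calc π * c^(2*m+1) = π * (2*(m:ℝ)+1)^(2*m+1) := by rw [hcdef]; push_cast; ring
          _ ≤ _ := hk
      have ha : (0:ℝ) ≤ c^(c/2) * Real.sqrt π := by positivity
      have hb : (0:ℝ) ≤ (m ! : ℝ) * (2*Real.exp 1)^(c/2) := by positivity
      rw [← Real.sqrt_sq ha, ← Real.sqrt_sq hb]
      exact Real.sqrt_le_sqrt hsq
    have hfac : Real.Gamma (c+1) = ((2*m+1)! : ℝ) := h3
    rw [show (((2*m+1:ℕ)):ℝ) + 1 = c + 1 from rfl, hfac]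
    calc c^(c/2) * 2^(2*m+1) * (((2*m+1)! : ℝ) * (2:ℝ)^(-(((2*m+1:ℕ):ℝ))) * Real.sqrt π / (m !))
        = (c^(c/2) * Real.sqrt π) * (((2*m+1)! : ℝ) / (m !)) *
            ((2:ℝ)^(2*m+1) * (2:ℝ)^(-(((2*m+1:ℕ):ℝ)))) := by ring
      _ = (c^(c/2) * Real.sqrt π) * (((2*m+1)! : ℝ) / (m !)) := by rw [hpow2, mul_one]
      _ ≤ ((m ! : ℝ) * (2*Real.exp 1)^(c/2)) * (((2*m+1)! : ℝ) / (m !)) := by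
          apply mul_le_mul_of_nonneg_right main (by positivity)
      _ = ((2*m+1)! : ℝ) * (2*Real.exp 1)^(c/2) := by field_simp

lemma vol_cross (n : ℕ) [NeZero n] :
    volume {x : EuclideanSpace ℝ (Fin n) | ∑ j, |x j| ≤ 1} =
      ENNReal.ofReal (2^n / Real.Gamma ((n:ℝ) + 1)) := by
  have : Nonempty (Fin n) := Fin.pos_iff_nonempty.mp (Nat.pos_of_ne_zero (NeZero.ne n))
  have h := MeasureTheory.volume_sum_rpow_le (ι := Fin n) (p := 1) le_rfl 1
  have hset : {x : Fin n → ℝ | (∑ i, |x i| ^ (1:ℝ)) ^ (1/(1:ℝ)) ≤ 1} =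
      {x : Fin n → ℝ | ∑ j, |x j| ≤ 1} := by
    ext x
    simp [Real.rpow_one]
  rw [hset] at h
  rw [← ((EuclideanSpace.volume_preserving_symm_measurableEquiv_toLp (Fin n)).symm).measure_preimage
    (measurableSet_le (by fun_prop) measurable_const).nullMeasurableSet]
  have hpre : (MeasurableEquiv.toLp 2 (Fin n → ℝ)).symm.symm ⁻¹'
      {x : EuclideanSpace ℝ (Fin n) | ∑ j, |x j| ≤ 1} = {x : Fin n → ℝ | ∑ j, |x j| ≤ 1} := rfl
  rw [hpre, h]
  simp only [Fintype.card_fin, ENNReal.ofReal_one, one_pow, one_mul]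
  rw [show (1:ℝ)/1 + 1 = 2 by norm_num, Real.Gamma_two]
  norm_num

lemma vol_ball' (n : ℕ) [NeZero n] :
    (volume (Metric.closedBall (0 : EuclideanSpace ℝ (Fin n)) ((n:ℝ) ^ (-(1:ℝ)/2)))).toReal =
      ((n:ℝ) ^ (-(1:ℝ)/2))^n * (Real.sqrt π ^ n / Real.Gamma ((n:ℝ)/2 + 1)) := by
  have hn : 0 < n := Nat.pos_of_ne_zero (NeZero.ne n)
  have hr : (0:ℝ) < (n:ℝ) ^ (-(1:ℝ)/2) := by
    apply Real.rpow_pos_of_pos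
    exact_mod_cast hn
  rw [EuclideanSpace.volume_closedBall]
  simp only [Fintype.card_fin]
  have hg : (0:ℝ) < Real.Gamma ((n:ℝ)/2 + 1) := Real.Gamma_pos_of_pos (by positivity)
  rw [ENNReal.toReal_mul, ENNReal.toReal_pow, ENNReal.toReal_ofReal hr.le,
    ENNReal.toReal_ofReal (by positivity)]


/-- **Volume ratio of `ℓⁿ₁`.** For every `n ≥ 1`,
`n^{n/2} · 2ⁿ · Γ(1+n/2) / (Γ(n+1) π^{n/2}) ≤ (2e/π)^{n/2}`; equivalently, since the
Euclidean ball of maximal volume inside the cross-polytope `Bⁿ₁` has radius `n^{-1/2}`,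
`vol(Bⁿ₁) / vol(n^{-1/2} Bⁿ₂) ≤ (2e/π)^{n/2}`. -/
theorem statement17 (n : ℕ) (hn : 1 ≤ n) :
    (n : ℝ) ^ ((n : ℝ) / 2) * 2 ^ n * Real.Gamma (1 + (n : ℝ) / 2) /
        (Real.Gamma ((n : ℝ) + 1) * Real.pi ^ ((n : ℝ) / 2)) ≤
      (2 * Real.exp 1 / Real.pi) ^ ((n : ℝ) / 2) ∧
    (volume {x : EuclideanSpace ℝ (Fin n) | ∑ j, |x j| ≤ 1}).toReal /
        (volume (Metric.closedBall (0 : EuclideanSpace ℝ (Fin n))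
          ((n : ℝ) ^ (-(1 : ℝ) / 2)))).toReal ≤
      (2 * Real.exp 1 / Real.pi) ^ ((n : ℝ) / 2) := by
  have hnr : (0:ℝ) < (n:ℝ) := by exact_mod_cast hn
  have hG1 : (0:ℝ) < Real.Gamma ((n:ℝ) + 1) := Real.Gamma_pos_of_pos (by positivity)
  have hG2 : (0:ℝ) < Real.Gamma (1 + (n:ℝ)/2) := Real.Gamma_pos_of_pos (by positivity)
  have hpis : (0:ℝ) < π ^ ((n:ℝ)/2) := Real.rpow_pos_of_pos pi_pos _
  have hrpow : (2 * Real.exp 1 / π) ^ ((n:ℝ)/2) * π ^ ((n:ℝ)/2) = (2*Real.exp 1) ^ ((n:ℝ)/2) := by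
    rw [← Real.mul_rpow (by positivity) pi_pos.le, div_mul_cancel₀]
    exact pi_ne_zero
  have part1 : (n : ℝ) ^ ((n : ℝ) / 2) * 2 ^ n * Real.Gamma (1 + (n : ℝ) / 2) /
      (Real.Gamma ((n : ℝ) + 1) * π ^ ((n : ℝ) / 2)) ≤
      (2 * Real.exp 1 / π) ^ ((n : ℝ) / 2) := by
    rw [div_le_iff₀ (by positivity)]
    calc (n : ℝ) ^ ((n : ℝ) / 2) * 2 ^ n * Real.Gamma (1 + (n : ℝ) / 2)
        ≤ Real.Gamma ((n:ℝ)+1) * (2*Real.exp 1)^((n:ℝ)/2) := key n hn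
      _ = (2 * Real.exp 1 / π) ^ ((n:ℝ)/2) * (Real.Gamma ((n:ℝ)+1) * π ^ ((n:ℝ)/2)) := by
          rw [show (2 * Real.exp 1 / π) ^ ((n:ℝ)/2) * (Real.Gamma ((n:ℝ)+1) * π ^ ((n:ℝ)/2))
              = Real.Gamma ((n:ℝ)+1) * ((2 * Real.exp 1 / π) ^ ((n:ℝ)/2) * π ^ ((n:ℝ)/2)) by ring,
            hrpow]
  refine ⟨part1, ?_⟩
  have : NeZero n := ⟨by omega⟩
  have hA : (volume {x : EuclideanSpace ℝ (Fin n) | ∑ j, |x j| ≤ 1}).toReal =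
      2^n / Real.Gamma ((n:ℝ) + 1) := by
    rw [vol_cross n, ENNReal.toReal_ofReal (by positivity)]
  have hB := vol_ball' n
  rw [hA, hB]
  -- show the ratio equals the part-1 LHS
  have hr : (0:ℝ) < (n:ℝ) ^ (-(1:ℝ)/2) := Real.rpow_pos_of_pos hnr _
  have e1 : ((n:ℝ) ^ (-(1:ℝ)/2))^n = ((n:ℝ) ^ ((n:ℝ)/2))⁻¹ := by
    rw [← Real.rpow_natCast ((n:ℝ) ^ (-(1:ℝ)/2)) n, ← Real.rpow_mul hnr.le,
      ← Real.rpow_neg hnr.le]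
    congr 1
    ring
  have e2 : Real.sqrt π ^ n = π ^ ((n:ℝ)/2) := by
    rw [Real.sqrt_eq_rpow, ← Real.rpow_natCast (π ^ ((1:ℝ)/2)) n, ← Real.rpow_mul pi_pos.le]
    congr 1
    ring
  have e3 : Real.Gamma ((n:ℝ)/2 + 1) = Real.Gamma (1 + (n:ℝ)/2) := by rw [add_comm]
  rw [e1, e2, e3]
  have hnn : (0:ℝ) < (n:ℝ) ^ ((n:ℝ)/2) := Real.rpow_pos_of_pos hnr _
  have heq : 2^n / Real.Gamma ((n:ℝ) + 1) /
      (((n:ℝ) ^ ((n:ℝ)/2))⁻¹ * (π ^ ((n:ℝ)/2) / Real.Gamma (1 + (n:ℝ)/2))) =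
      (n : ℝ) ^ ((n : ℝ) / 2) * 2 ^ n * Real.Gamma (1 + (n : ℝ) / 2) /
        (Real.Gamma ((n : ℝ) + 1) * π ^ ((n : ℝ) / 2)) := by
    field_simp
  rw [heq]
  exact part1
end

section
/- Let (u_i)_{i=1}^m be unit vectors in R^n and (c_i)_{i=1}^m positive real numbers such that Σ_{i=1}^m c_i u_i⊗u_i = I_n and Σ_{i=1}^m c_i u_i = 0. Regard R^{n+1} as R^n × R and for each i set v_i = √(n/(n+1)) · (−u_i, 1/√n) ∈ R^{n+1} and d_i = ((n+1)/n) c_i. Then each v_i is a unit vector in R^{n+1}, Σ_{i=1}^m d_i v_i⊗v_i = I_{n+1}, and Σ_{i=1}^m d_i = n + 1. -/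
open MeasureTheory Finset
open scoped RealInnerProductSpace

private lemma coord_sum {m k : ℕ} (f : Fin m → EuclideanSpace ℝ (Fin k)) (j : Fin k) :
    (∑ i, f i) j = ∑ i, f i j := by
  have := map_sum (EuclideanSpace.proj j (𝕜 := ℝ)) f Finset.univ
  simp only [PiLp.proj_apply] at this
  exact this

/-- **The lifting step in the proof of Theorem 1′.** Given John's conditions
`Σ cᵢ uᵢ⊗uᵢ = Iₙ` and `Σ cᵢ uᵢ = 0` in `ℝⁿ`, the lifted vectors
`vᵢ = √(n/(n+1)) (−uᵢ, 1/√n) ∈ ℝ^{n+1}` and weights `dᵢ = ((n+1)/n) cᵢ` satisfy: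
each `vᵢ` is a unit vector, `Σ dᵢ vᵢ⊗vᵢ = I_{n+1}`, and `Σ dᵢ = n + 1`. -/
theorem statement18 {n m : ℕ} (hn : 0 < n)
    (u : Fin m → EuclideanSpace ℝ (Fin n)) (c : Fin m → ℝ)
    (hu : ∀ i, ‖u i‖ = 1) (hc : ∀ i, 0 < c i)
    (hJohn : ∀ x : EuclideanSpace ℝ (Fin n), ∑ i, c i • ⟪u i, x⟫ • u i = x)
    (hbar : ∑ i, c i • u i = 0)
    (v : Fin m → EuclideanSpace ℝ (Fin (n + 1)))
    (hv : ∀ i, ∀ j : Fin (n + 1),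
      v i j = if h : (j : ℕ) < n
        then Real.sqrt ((n : ℝ) / ((n : ℝ) + 1)) * (-(u i ⟨(j : ℕ), h⟩))
        else Real.sqrt ((n : ℝ) / ((n : ℝ) + 1)) * (1 / Real.sqrt n))
    (d : Fin m → ℝ) (hd : ∀ i, d i = (((n : ℝ) + 1) / n) * c i) :
    (∀ i, ‖v i‖ = 1) ∧
    (∀ y : EuclideanSpace ℝ (Fin (n + 1)), ∑ i, d i • ⟪v i, y⟫ • v i = y) ∧
    (∑ i, d i = (n : ℝ) + 1) := by
  have hnR : (0:ℝ) < n := by exact_mod_cast hn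
  set s : ℝ := Real.sqrt ((n : ℝ) / ((n : ℝ) + 1)) with hs
  have hs2 : s ^ 2 = (n : ℝ) / ((n : ℝ) + 1) := Real.sq_sqrt (by positivity)
  have hsn : (Real.sqrt n) ^ 2 = (n : ℝ) := Real.sq_sqrt hnR.le
  have hsnpos : (0:ℝ) < Real.sqrt n := Real.sqrt_pos.mpr hnR
  -- v coordinates
  have hv1 : ∀ i, ∀ k : Fin n, v i k.castSucc = s * (-(u i k)) := by
    intro i k
    rw [hv]
    rw [dif_pos (show ((k.castSucc : Fin (n+1)) : ℕ) < n from k.isLt)]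
    have hk : (⟨((k.castSucc : Fin (n+1)) : ℕ), k.isLt⟩ : Fin n) = k := Fin.ext (by simp)
    simp only [Fin.coe_castSucc, Fin.eta]
  have hv2 : ∀ i, v i (Fin.last n) = s * (1 / Real.sqrt n) := by
    intro i
    rw [hv]
    rw [dif_neg (by simp)]
  -- ∑ (u i j)^2 = 1
  have hA : ∀ i, ∑ j : Fin n, u i j * u i j = 1 := by
    intro i
    have h2 : ⟪u i, u i⟫ = 1 := by
      rw [real_inner_self_eq_norm_sq, hu i]; norm_num
    simp only [PiLp.inner_apply, RCLike.inner_apply, conj_trivial] at h2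
    exact h2
  -- hJohn coordinatewise
  have hJ : ∀ (x : EuclideanSpace ℝ (Fin n)) (k : Fin n),
      ∑ i, c i * ((∑ j, u i j * x j) * u i k) = x k := by
    intro x k
    have h0 := congrArg (fun z : EuclideanSpace ℝ (Fin n) => z k) (hJohn x)
    simp only at h0
    rw [coord_sum] at h0
    simp only [PiLp.smul_apply, smul_eq_mul, PiLp.inner_apply, RCLike.inner_apply,
      conj_trivial] at h0
    rw [← h0]
    exact Finset.sum_congr rfl fun i _ => by
      rw [Finset.sum_congr rfl fun j _ => mul_comm (u i j) (x j)]
  -- hbar coordinatewise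
  have hB : ∀ k : Fin n, ∑ i, c i * u i k = 0 := by
    intro k
    have h0 := congrArg (fun z : EuclideanSpace ℝ (Fin n) => z k) hbar
    simp only at h0
    rw [coord_sum] at h0
    simpa [PiLp.smul_apply, smul_eq_mul] using h0
  -- trace
  have h1 : ∀ k : Fin n, ∑ i, c i * (u i k * u i k) = 1 := by
    intro k
    have := hJ (EuclideanSpace.single k 1) k
    simpa [EuclideanSpace.single_apply] using this
  have htrace : ∑ i, c i = (n : ℝ) := by
    have e1 : ∑ i, ∑ k : Fin n, c i * (u i k * u i k) = ∑ i, c i := by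
      refine Finset.sum_congr rfl fun i _ => ?_
      rw [← Finset.mul_sum, hA i, mul_one]
    rw [← e1, Finset.sum_comm]
    simp [h1]
  refine ⟨?_, ?_, ?_⟩
  · -- unit vectors
    intro i
    have hsum : ∑ j : Fin (n+1), v i j ^ 2 = 1 := by
      rw [Fin.sum_univ_castSucc]
      have e2 : ∑ k : Fin n, v i k.castSucc ^ 2 = s ^ 2 := by
        have : ∀ k : Fin n, v i k.castSucc ^ 2 = s ^ 2 * (u i k * u i k) := by
          intro k; rw [hv1]; ring
        rw [Finset.sum_congr rfl fun k _ => this k, ← Finset.mul_sum, hA i, mul_one]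
      rw [e2, hv2]
      rw [mul_pow, div_pow, one_pow, hsn, hs2]
      field_simp
    rw [EuclideanSpace.norm_eq]
    simp only [Real.norm_eq_abs, sq_abs]
    rw [hsum, Real.sqrt_one]
  · -- resolution of identity
    intro y
    set x : EuclideanSpace ℝ (Fin n) := WithLp.toLp 2 (fun k : Fin n => y k.castSucc) with hx
    set t : ℝ := y (Fin.last n) with ht
    have hxk : ∀ k : Fin n, x k = y k.castSucc := fun k => rfl
    -- inner products
    have hip : ∀ i, ⟪v i, y⟫ = s * (-(∑ k, u i k * x k) + (1 / Real.sqrt n) * t) := by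
      intro i
      rw [PiLp.inner_apply]
      simp only [RCLike.inner_apply, conj_trivial]
      rw [Fin.sum_univ_castSucc, hv2]
      have : ∀ k : Fin n, y k.castSucc * v i k.castSucc = -(s * (u i k * x k)) := by
        intro k; rw [hv1, hxk]; ring
      rw [Finset.sum_congr rfl fun k _ => this k, Finset.sum_neg_distrib, ← Finset.mul_sum]
      ring
    -- key sum : ∑ c i * P i = 0  where P i = ⟪u i, x⟫
    have hC : ∑ i, c i * ∑ k, u i k * x k = 0 := by
      have : ∀ i, c i * ∑ k, u i k * x k = ∑ k, (c i * u i k) * x k := by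
        intro i; rw [Finset.mul_sum]; exact Finset.sum_congr rfl fun k _ => by ring
      rw [Finset.sum_congr rfl fun i _ => this i, Finset.sum_comm]
      refine Finset.sum_eq_zero fun k _ => ?_
      rw [← Finset.sum_mul, hB k, zero_mul]
    have hdn : ∀ i, d i * s ^ 2 = c i := by
      intro i
      rw [hd i, hs2]
      field_simp
    ext j
    rw [coord_sum]
    simp only [PiLp.smul_apply, smul_eq_mul]
    rcases Fin.eq_castSucc_or_eq_last j with ⟨k, rfl⟩ | rfl
    · -- j < n case
      have key : ∀ i, d i * (⟪v i, y⟫ * v i k.castSucc)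
          = c i * ((∑ l, u i l * x l) * u i k) - ((1 / Real.sqrt n) * t) * (c i * u i k) := by
        intro i
        rw [hip i, hv1]
        linear_combination ((∑ l, u i l * x l - (1 / Real.sqrt n) * t) * u i k) * hdn i
      rw [Finset.sum_congr rfl fun i _ => key i, Finset.sum_sub_distrib, hJ x k,
        ← Finset.mul_sum, hB k, mul_zero, sub_zero, hxk]
    · -- j = n case
      have key : ∀ i, d i * (⟪v i, y⟫ * v i (Fin.last n))
          = -((1 / Real.sqrt n) * (c i * ∑ l, u i l * x l)) + (t / n) * c i := by
        intro i
        rw [hip i, hv2]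
        have hn2 : (1 / Real.sqrt n) * (1 / Real.sqrt n) = 1 / (n:ℝ) := by
          rw [div_mul_div_comm, one_mul, ← sq, hsn]
        linear_combination ((-(∑ l, u i l * x l) + (1 / Real.sqrt n) * t) * (1 / Real.sqrt n)) * hdn i + (c i * t) * hn2
      rw [Finset.sum_congr rfl fun i _ => key i, Finset.sum_add_distrib,
        Finset.sum_neg_distrib, ← Finset.mul_sum, ← Finset.mul_sum, hC, mul_zero, neg_zero,
        zero_add, htrace, ← ht]
      field_simp
  · -- sum of weights
    have : ∑ i, d i = (((n:ℝ)+1)/n) * ∑ i, c i := by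
      rw [Finset.mul_sum]
      exact Finset.sum_congr rfl fun i _ => hd i
    rw [this, htrace]
    field_simp
end
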